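/- arXiv:0708.3533 — 2 statements merged into one kernel-verified Lean document; each statement's English description precedes it below -/
import Mathlib

section
/- Assume the MFS setup with eigenvalue bounds (H_s) and boundary-data decay |v̂(m)| ≤ C_v·ρ^{−|m|} for all m ∈ ℤ, where ρ = R² (and R > 1). Then there exists a constant C > 0, depending on R, c_s, C_s, C_v (and on ŝ(0), v̂(0)) but not on N, such that for every even integer N ≥ 2 there exists a coefficient vector α̂ ∈ ℂ^N with boundary error t(α̂) ≤ C·√N·R^{−N}. -/
open scoped BigOperators ENNReal NNReal

noncomputable section

/-- The unique representative of `m` modulo `N` lying in the window `(-N/2, N/2]`. -/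
def winRep (N : ℕ) (m : ℤ) : ℤ := (m + (N : ℤ) / 2 - 1) % (N : ℤ) - ((N : ℤ) / 2 - 1)

/-- The index window `(-N/2, N/2]` as a finite set of integers. -/
def window (N : ℕ) : Finset ℤ := Finset.Icc (-(N : ℤ) / 2 + 1) ((N : ℤ) / 2)

/-- The norm `|α̂|` of a coefficient vector indexed by the window. -/
def coefNorm (N : ℕ) (a : ℤ → ℂ) : ℝ := Real.sqrt (∑ k ∈ window N, ‖a k‖ ^ 2)

/-- The boundary error norm
`t(α̂) = (2π·∑_{m∈ℤ} |(N/(2π))·ŝ(m)·α̂_{⟨m⟩_N} − v̂(m)|²)^{1/2}`, valued in `[0,∞]`. -/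
def tErr (N : ℕ) (s v a : ℤ → ℂ) : ℝ≥0∞ :=
  (ENNReal.ofReal (2 * Real.pi) *
    ∑' m : ℤ, (‖((N : ℂ) / (2 * (Real.pi : ℂ))) * s m * a (winRep N m) - v m‖₊ : ℝ≥0∞) ^ 2)
    ^ (1 / 2 : ℝ)

/-! Take the collocation coefficients `α̂_k = (2π/N)·v̂(k)/ŝ(k)`, so that the residual vanishes on
the window. Off the window `m = k + jN` with `k` in the window and `j ≠ 0`, so `|k| ≤ N/2 ≤ |m|`
and `|m| + |k| ≥ |j|N`. There the residual `ŝ(m)·v̂(k)/ŝ(k) − v̂(m)` is `O(R^{-(|m|+|k|)})`, since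
the decay `ρ^{-|k|} = R^{-2|k|}` of `v̂(k)` beats the growth `|k|·R^{|k|}` of `1/ŝ(k)`. Summing the
geometric series in `j` over the `N` window indices gives `t(α̂)² = O(N·R^{-2N})`. -/

open Real

lemma zpow_neg_abs {K : Type*} [DivisionRing K] (x : K) (m : ℤ) : x ^ (-|m|) = x⁻¹ ^ m.natAbs := by
  rw [Int.abs_eq_natAbs, zpow_neg, zpow_natCast, inv_pow]

lemma ENNReal.tsum_int_le_of_le_geometric {f : ℤ → ℝ≥0∞} {c q : ℝ≥0∞} (hf0 : f 0 = 0)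
    (hf : ∀ j ≠ 0, f j ≤ c * q ^ j.natAbs) : ∑' j, f j ≤ 2 * (c * q * (1 - q)⁻¹) := by
  have half : ∀ g : ℕ → ℤ, (∀ n, (g n).natAbs = n + 1) → ∑' n, f (g n) ≤ c * q * (1 - q)⁻¹ := by
    intro g hg
    calc ∑' n, f (g n) ≤ ∑' n, c * q * q ^ n := ENNReal.tsum_le_tsum fun n => by
          have := hf (g n) (by have := hg n; omega)
          rwa [hg, pow_succ', ← mul_assoc] at this
      _ = c * q * (1 - q)⁻¹ := by rw [ENNReal.tsum_mul_left, ENNReal.tsum_geometric]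
  rw [tsum_of_add_one_of_neg_add_one ENNReal.summable ENNReal.summable, hf0, add_zero, two_mul]
  exact add_le_add (half _ fun n => by omega) (half _ fun n => by omega)

lemma tsum_int_nnnorm_sq_le_of_le_geometric {E : Type*} [SeminormedAddGroup E] {e : ℤ → E}
    {c q : ℝ} (hq0 : 0 ≤ q) (hq1 : q < 1) (he0 : e 0 = 0)
    (he : ∀ j ≠ 0, ‖e j‖ ≤ c * q ^ j.natAbs) :
    ∑' j, (‖e j‖₊ : ℝ≥0∞) ^ 2 ≤ ENNReal.ofReal (2 * c ^ 2 * q ^ 2 / (1 - q ^ 2)) := by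
  have hq2 : 0 < 1 - q ^ 2 := by nlinarith
  have key := ENNReal.tsum_int_le_of_le_geometric (f := fun j => (‖e j‖₊ : ℝ≥0∞) ^ 2)
    (c := ENNReal.ofReal (c ^ 2)) (q := ENNReal.ofReal (q ^ 2)) (by simp [he0]) fun j hj => by
      calc (‖e j‖₊ : ℝ≥0∞) ^ 2 = ENNReal.ofReal (‖e j‖ ^ 2) := by
            rw [ENNReal.ofReal_pow (norm_nonneg _), ofReal_norm, enorm_eq_nnnorm]
        _ ≤ ENNReal.ofReal ((c * q ^ j.natAbs) ^ 2) :=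
            ENNReal.ofReal_le_ofReal (pow_le_pow_left₀ (norm_nonneg _) (he j hj) 2)
        _ = ENNReal.ofReal (c ^ 2) * ENNReal.ofReal (q ^ 2) ^ j.natAbs := by
            rw [mul_pow, ← pow_mul, mul_comm j.natAbs, pow_mul, ENNReal.ofReal_mul (by positivity),
              ENNReal.ofReal_pow (sq_nonneg q)]
  refine key.trans_eq ?_
  rw [← ENNReal.ofReal_one, ← ENNReal.ofReal_sub _ (by positivity),
    ← ENNReal.ofReal_inv_of_pos hq2, ← ENNReal.ofReal_mul (by positivity),
    ← ENNReal.ofReal_mul (by positivity), ← ENNReal.ofReal_ofNat 2,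
    ← ENNReal.ofReal_mul (by norm_num)]
  congr 1
  ring

lemma ENNReal.ofReal_mul_rpow_half {x y : ℝ} (hx : 0 ≤ x) (hy : 0 ≤ y) :
    (ENNReal.ofReal x * ENNReal.ofReal y) ^ (1 / 2 : ℝ) = ENNReal.ofReal (√(x * y)) := by
  rw [← ENNReal.ofReal_mul hx, ENNReal.ofReal_rpow_of_nonneg (by positivity) (by norm_num),
    sqrt_eq_rpow]

lemma norm_mul_sub_le_of_bounds {A : Type*} [SeminormedRing A] {z w y : A} {r Cs Cv M : ℝ}
    {p n : ℕ} (hr0 : 0 ≤ r) (hr1 : r ≤ 1) (hCs : 0 ≤ Cs) (hCv : 0 ≤ Cv) (hM : 0 ≤ M)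
    (hp : 0 < p) (hnp : n ≤ p)
    (hz : ‖z‖ ≤ Cs / p * r ^ p) (hw : ‖w‖ ≤ M * (n + 1) * r ^ n) (hy : ‖y‖ ≤ Cv * r ^ (2 * p)) :
    ‖z * w - y‖ ≤ (2 * Cs * M + Cv) * r ^ (p + n) := by
  have hpR : (0 : ℝ) < p := by exact_mod_cast hp
  have hnp' : ((n : ℝ) + 1) / p ≤ 2 := by
    rw [div_le_iff₀ hpR]
    have : (n : ℝ) + 1 ≤ p + p := by exact_mod_cast (by omega : n + 1 ≤ p + p)
    linarith
  have hzw : ‖z * w‖ ≤ 2 * Cs * M * r ^ (p + n) :=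
    calc ‖z * w‖ ≤ (Cs / p * r ^ p) * (M * (n + 1) * r ^ n) :=
          (norm_mul_le z w).trans (mul_le_mul hz hw (norm_nonneg w) (by positivity))
      _ = Cs * M * ((n + 1) / p) * r ^ (p + n) := by rw [pow_add]; field_simp
      _ ≤ Cs * M * 2 * r ^ (p + n) := by gcongr
      _ = 2 * Cs * M * r ^ (p + n) := by ring
  have hy' : ‖y‖ ≤ Cv * r ^ (p + n) :=
    hy.trans (mul_le_mul_of_nonneg_left (pow_le_pow_of_le_one hr0 hr1 (by omega)) hCv)
  calc ‖z * w - y‖ ≤ ‖z * w‖ + ‖y‖ := norm_sub_le _ _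
    _ ≤ (2 * Cs * M + Cv) * r ^ (p + n) := by linarith

section Window

variable {N : ℕ}

lemma winRep_add_mul (hN : Even N) (hN0 : 0 < N) {k : ℤ} (hk : k ∈ window N) (j : ℤ) :
    winRep N (k + j * N) = k := by
  obtain ⟨n, rfl⟩ := hN
  rw [window, Finset.mem_Icc] at hk
  rw [winRep, show k + j * ↑(n + n) + ↑(n + n) / 2 - 1 = k + ↑(n + n) / 2 - 1 + j * ↑(n + n) by
    ring, Int.add_mul_emod_self_right, Int.emod_eq_of_lt (by omega) (by omega)]
  ring

lemma winRep_add_mul_ediv (hN : Even N) (hN0 : 0 < N) {k : ℤ} (hk : k ∈ window N) (j : ℤ) :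
    (k + j * N + (N : ℤ) / 2 - 1) / N = j := by
  obtain ⟨n, rfl⟩ := hN
  rw [window, Finset.mem_Icc] at hk
  rw [show k + j * ↑(n + n) + ↑(n + n) / 2 - 1 = k + ↑(n + n) / 2 - 1 + j * ↑(n + n) by ring,
    Int.add_mul_ediv_right _ _ (by omega), Int.ediv_eq_zero_of_lt (by omega) (by omega), zero_add]

lemma winRep_mem_window (hN : Even N) (hN0 : 0 < N) (m : ℤ) : winRep N m ∈ window N := by
  obtain ⟨n, rfl⟩ := hN
  have := Int.emod_nonneg (m + ↑(n + n) / 2 - 1) (b := ↑(n + n)) (by omega)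
  have := Int.emod_lt_of_pos (m + ↑(n + n) / 2 - 1) (b := ↑(n + n)) (by omega)
  rw [window, Finset.mem_Icc, winRep]
  omega

lemma winRep_add_ediv_mul (N : ℕ) (m : ℤ) :
    winRep N m + (m + (N : ℤ) / 2 - 1) / N * N = m := by
  have := Int.mul_ediv_add_emod (m + (N : ℤ) / 2 - 1) N
  rw [winRep]
  linarith

lemma card_window (hN : Even N) : (window N).card = N := by
  obtain ⟨n, rfl⟩ := hN
  rw [window, Int.card_Icc]
  omega

lemma two_mul_natAbs_le_of_mem_window {k : ℤ} (hk : k ∈ window N) : 2 * k.natAbs ≤ N := by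
  rw [window, Finset.mem_Icc] at hk
  omega

/-- `(k, j) ↦ k + j * N`. -/
def windowEquiv (hN : Even N) (hN0 : 0 < N) : window N × ℤ ≃ ℤ where
  toFun p := p.1 + p.2 * N
  invFun m := (⟨winRep N m, winRep_mem_window hN hN0 m⟩, (m + (N : ℤ) / 2 - 1) / N)
  left_inv p := by
    ext
    · exact winRep_add_mul hN hN0 p.1.2 p.2
    · exact winRep_add_mul_ediv hN hN0 p.1.2 p.2
  right_inv m := winRep_add_ediv_mul N m

lemma tsum_eq_sum_window_tsum (hN : Even N) (hN0 : 0 < N) (g : ℤ → ℝ≥0∞) :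
    ∑' m, g m = ∑ k ∈ window N, ∑' j : ℤ, g (k + j * N) := by
  rw [← (windowEquiv hN hN0).tsum_eq, ENNReal.tsum_prod', tsum_fintype,
    ← Finset.sum_coe_sort (window N)]
  rfl

end Window

section EigenvalueBounds

variable {N : ℕ} {s v : ℤ → ℂ} {r cs Cs Cv M : ℝ}

lemma ne_zero_of_lower_bound (hr : 0 < r) (hcs : 0 < cs) (hs0 : s 0 ≠ 0)
    (hsl : ∀ m ≠ 0, cs / m.natAbs * r ^ m.natAbs ≤ ‖s m‖) (m : ℤ) : s m ≠ 0 := by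
  rcases eq_or_ne m 0 with rfl | hm
  · exact hs0
  · have : 0 < m.natAbs := Int.natAbs_pos.mpr hm
    exact norm_pos_iff.mp
      ((by positivity : 0 < cs / m.natAbs * r ^ m.natAbs).trans_le (hsl m hm))

lemma norm_div_le_of_bounds (hr : 0 < r) (hcs : 0 < cs)
    (hsl : ∀ m ≠ 0, cs / m.natAbs * r ^ m.natAbs ≤ ‖s m‖)
    (hv : ∀ m, ‖v m‖ ≤ Cv * r ^ (2 * m.natAbs)) (k : ℤ) :
    ‖v k / s k‖ ≤ max (Cv / cs) (Cv / ‖s 0‖) * (k.natAbs + 1) * r ^ k.natAbs := by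
  have hCv : 0 ≤ Cv := by simpa using (norm_nonneg _).trans (hv 0)
  have hM : Cv / cs ≤ max (Cv / cs) (Cv / ‖s 0‖) := le_max_left _ _
  rw [norm_div]
  rcases eq_or_ne k 0 with rfl | hk
  · simpa using (div_le_div_of_nonneg_right (by simpa using hv 0) (norm_nonneg _)).trans
      (le_max_right (Cv / cs) _)
  · have hn : (0 : ℝ) < k.natAbs := by exact_mod_cast Int.natAbs_pos.mpr hk
    calc ‖v k‖ / ‖s k‖ ≤ Cv * r ^ (2 * k.natAbs) / (cs / k.natAbs * r ^ k.natAbs) :=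
          div_le_div₀ (by positivity) (hv k) (by positivity) (hsl k hk)
      _ = Cv / cs * k.natAbs * r ^ k.natAbs := by rw [two_mul, pow_add]; field_simp
      _ ≤ max (Cv / cs) (Cv / ‖s 0‖) * (k.natAbs + 1) * r ^ k.natAbs := by
          gcongr
          linarith

def collocationCoef (N : ℕ) (s v : ℤ → ℂ) (k : ℤ) : ℂ := 2 * π / N * (v k / s k)

lemma collocation_residual (hN : N ≠ 0) (m k : ℤ) :
    (N : ℂ) / (2 * π) * s m * collocationCoef N s v k - v m = s m * (v k / s k) - v m := by
  have : (π : ℂ) ≠ 0 := by exact_mod_cast pi_ne_zero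
  rw [collocationCoef]
  field_simp

lemma norm_collocation_residual_le (hN0 : 0 < N) (hr0 : 0 ≤ r) (hr1 : r ≤ 1) (hCs : 0 ≤ Cs)
    (hCv : 0 ≤ Cv) (hM : 0 ≤ M) (hsu : ∀ m ≠ 0, ‖s m‖ ≤ Cs / m.natAbs * r ^ m.natAbs)
    (hv : ∀ m, ‖v m‖ ≤ Cv * r ^ (2 * m.natAbs))
    (hw : ∀ k, ‖v k / s k‖ ≤ M * (k.natAbs + 1) * r ^ k.natAbs)
    {k : ℤ} (hk : k ∈ window N) {j : ℤ} (hj : j ≠ 0) :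
    ‖s (k + j * N) * (v k / s k) - v (k + j * N)‖ ≤ (2 * Cs * M + Cv) * (r ^ N) ^ j.natAbs := by
  have hkN := two_mul_natAbs_le_of_mem_window hk
  have hjN : N * j.natAbs ≤ (k + j * N).natAbs + k.natAbs := by
    simpa [Int.natAbs_mul, mul_comm] using Int.natAbs_sub_le (k + j * N) k
  have hNj : N ≤ N * j.natAbs := Nat.le_mul_of_pos_right N (Int.natAbs_pos.mpr hj)
  have hm : k + j * N ≠ 0 := by omega
  refine (norm_mul_sub_le_of_bounds hr0 hr1 hCs hCv hM (Int.natAbs_pos.mpr hm) (by omega)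
    (hsu _ hm) (hw k) (hv _)).trans ?_
  rw [← pow_mul]
  exact mul_le_mul_of_nonneg_left (pow_le_pow_of_le_one hr0 hr1 hjN) (by positivity)

lemma tErr_collocationCoef_le (hN : Even N) (hN0 : 0 < N) (hr0 : 0 ≤ r) (hr1 : r < 1)
    (hCs : 0 ≤ Cs) (hCv : 0 ≤ Cv) (hM : 0 ≤ M) (hs : ∀ m, s m ≠ 0)
    (hsu : ∀ m ≠ 0, ‖s m‖ ≤ Cs / m.natAbs * r ^ m.natAbs)
    (hv : ∀ m, ‖v m‖ ≤ Cv * r ^ (2 * m.natAbs))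
    (hw : ∀ k, ‖v k / s k‖ ≤ M * (k.natAbs + 1) * r ^ k.natAbs) :
    tErr N s v (collocationCoef N s v) ≤
      ENNReal.ofReal (√(4 * π * (2 * Cs * M + Cv) ^ 2 / (1 - (r ^ N) ^ 2)) * √N * r ^ N) := by
  set A := 2 * Cs * M + Cv
  have hq : r ^ N < 1 := pow_lt_one₀ hr0 hr1 hN0.ne'
  have hq2 : 0 < 1 - (r ^ N) ^ 2 := by nlinarith [pow_nonneg hr0 N]
  have hB : 0 ≤ 4 * π * A ^ 2 / (1 - (r ^ N) ^ 2) := by positivity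
  have hfiber : ∀ k ∈ window N,
      ∑' j : ℤ, (‖s (k + j * N) * (v (winRep N (k + j * N)) / s (winRep N (k + j * N)))
        - v (k + j * N)‖₊ : ℝ≥0∞) ^ 2 ≤
        ENNReal.ofReal (2 * A ^ 2 * (r ^ N) ^ 2 / (1 - (r ^ N) ^ 2)) := by
    intro k hk
    simp only [winRep_add_mul hN hN0 hk]
    refine tsum_int_nnnorm_sq_le_of_le_geometric (pow_nonneg hr0 N) hq ?_
      fun j hj => norm_collocation_residual_le hN0 hr0 hr1.le hCs hCv hM hsu hv hw hk hj
    simp [mul_div_cancel₀ _ (hs k)]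
  have hsum : ∑' m : ℤ, (‖s m * (v (winRep N m) / s (winRep N m)) - v m‖₊ : ℝ≥0∞) ^ 2 ≤
      ENNReal.ofReal (N * (2 * A ^ 2 * (r ^ N) ^ 2 / (1 - (r ^ N) ^ 2))) := by
    rw [tsum_eq_sum_window_tsum hN hN0]
    refine (Finset.sum_le_card_nsmul _ _ _ hfiber).trans_eq ?_
    rw [card_window hN, nsmul_eq_mul, ENNReal.ofReal_mul (by positivity), ENNReal.ofReal_natCast]
  rw [tErr]
  simp only [collocation_residual hN0.ne']
  calc _ ≤ (ENNReal.ofReal (2 * π) *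
        ENNReal.ofReal (N * (2 * A ^ 2 * (r ^ N) ^ 2 / (1 - (r ^ N) ^ 2)))) ^ (1 / 2 : ℝ) := by
        gcongr
    _ = _ := by
      rw [ENNReal.ofReal_mul_rpow_half (by positivity)
          (mul_nonneg N.cast_nonneg (div_nonneg (by positivity) hq2.le)),
        show 2 * π * (N * (2 * A ^ 2 * (r ^ N) ^ 2 / (1 - (r ^ N) ^ 2)))
          = 4 * π * A ^ 2 / (1 - (r ^ N) ^ 2) * N * (r ^ N) ^ 2 by ring,
        sqrt_mul (mul_nonneg hB N.cast_nonneg), sqrt_mul hB, sqrt_sq (pow_nonneg hr0 N)]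

end EigenvalueBounds

theorem mfs_convergence_rho_eq_Rsq_general
    (R ρ cs Cs Cv : ℝ) (hR : 1 < R) (hρ2 : ρ = R ^ 2)
    (hcs : 0 < cs) (hcsCs : cs ≤ Cs) (hCv : 0 < Cv)
    (s v : ℤ → ℂ)
    (hs0 : s 0 ≠ 0)
    (hsl : ∀ m : ℤ, m ≠ 0 → cs / |(m : ℝ)| * R ^ (-|m|) ≤ ‖s m‖)
    (hsu : ∀ m : ℤ, m ≠ 0 → ‖s m‖ ≤ Cs / |(m : ℝ)| * R ^ (-|m|))
    (hv : ∀ m : ℤ, ‖v m‖ ≤ Cv * ρ ^ (-|m|)) :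
    ∃ C : ℝ, 0 < C ∧ ∀ N : ℕ, Even N → 2 ≤ N →
      ∃ a : ℤ → ℂ,
        tErr N s v a ≤ ENNReal.ofReal (C * Real.sqrt N * R ^ (-(N : ℝ))) := by
  subst hρ2
  have hr0 : 0 < R⁻¹ := inv_pos.mpr (by linarith)
  have hr1 : R⁻¹ < 1 := inv_lt_one_of_one_lt₀ hR
  have habs (m : ℤ) : |(m : ℝ)| = m.natAbs := by rw [Nat.cast_natAbs, Int.cast_abs]
  have hsl' : ∀ m ≠ 0, cs / m.natAbs * R⁻¹ ^ m.natAbs ≤ ‖s m‖ := fun m hm => by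
    simpa only [habs, zpow_neg_abs] using hsl m hm
  have hsu' : ∀ m ≠ 0, ‖s m‖ ≤ Cs / m.natAbs * R⁻¹ ^ m.natAbs := fun m hm => by
    simpa only [habs, zpow_neg_abs] using hsu m hm
  have hv' (m : ℤ) : ‖v m‖ ≤ Cv * R⁻¹ ^ (2 * m.natAbs) := by
    simpa only [zpow_neg_abs, pow_mul, inv_pow] using hv m
  set M := max (Cv / cs) (Cv / ‖s 0‖)
  have hM : 0 ≤ M := (div_pos hCv hcs).le.trans (le_max_left _ _)
  have hA : 0 < 2 * Cs * M + Cv := by nlinarith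
  have hr4 : 0 < 1 - R⁻¹ ^ 4 := sub_pos.mpr (pow_lt_one₀ hr0.le hr1 (by norm_num))
  refine ⟨√(4 * π * (2 * Cs * M + Cv) ^ 2 / (1 - R⁻¹ ^ 4)),
    sqrt_pos.mpr (div_pos (by positivity) hr4),
    fun N hN hN2 => ⟨collocationCoef N s v, ?_⟩⟩
  refine (tErr_collocationCoef_le hN (by omega) hr0.le hr1 (hcs.le.trans hcsCs) hCv.le hM
    (ne_zero_of_lower_bound hr0 hcs hs0 hsl') hsu' hv'
    (norm_div_le_of_bounds hr0 hcs hsl' hv')).trans (ENNReal.ofReal_le_ofReal ?_)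
  have hq : (R⁻¹ ^ N) ^ 2 ≤ R⁻¹ ^ 4 := by
    rw [← pow_mul]
    exact pow_le_pow_of_le_one hr0.le hr1.le (by omega)
  rw [rpow_neg (by linarith), rpow_natCast, ← inv_pow]
  gcongr

/-- MFS convergence on the unit disc, case `ρ = R²`: rate `√N·R^{-N}`. -/
theorem mfs_convergence_rho_eq_Rsq
    (R ρ cs Cs Cv : ℝ) (hR : 1 < R) (hρ1 : 1 < ρ) (hρ2 : ρ = R ^ 2)
    (hcs : 0 < cs) (hcsCs : cs ≤ Cs) (hCv : 0 < Cv)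
    (s v : ℤ → ℂ)
    (hs0 : s 0 ≠ 0) (hs0' : ‖s 0‖ ≤ Cs)
    (hsl : ∀ m : ℤ, m ≠ 0 → cs / |(m : ℝ)| * R ^ (-|m|) ≤ ‖s m‖)
    (hsu : ∀ m : ℤ, m ≠ 0 → ‖s m‖ ≤ Cs / |(m : ℝ)| * R ^ (-|m|))
    (hv : ∀ m : ℤ, ‖v m‖ ≤ Cv * ρ ^ (-|m|)) :
    ∃ C : ℝ, 0 < C ∧ ∀ N : ℕ, Even N → 2 ≤ N →
      ∃ a : ℤ → ℂ,
        tErr N s v a ≤ ENNReal.ofReal (C * Real.sqrt N * R ^ (-(N : ℝ))) :=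
  mfs_convergence_rho_eq_Rsq_general R ρ cs Cs Cv hR hρ2 hcs hcsCs hCv s v hs0 hsl hsu hv

end
end

section
/- Assume the MFS setup with eigenvalue upper bound |ŝ(m)| ≤ (C_s/|m|)·R^{−|m|} for m ≠ 0, and boundary-data lower bound |v̂(m)| ≥ c_v·ρ^{−|m|} for all m ∈ ℤ, where R > ρ > 1 and c_v > 0. Let c > 0 and define N_min := 2·max( ln(√(2/π)·c/c_v)/ln ρ , 1 ). Then there exists a constant C > 0 (depending on c, c_v, C_s, R, ρ but not on N) such that: for every even integer N with N > 3 + N_min, and every coefficient vector α̂ ∈ ℂ^N whose boundary error satisfies t(α̂) ≤ c·ρ^{−N/2}, the MFS coefficient norm satisfies √N·|α̂| ≥ C·√N·(R/ρ)^{N/2}; equivalently |α̂| ≥ C·(R/ρ)^{N/2}. -/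
/-! Take the mode `k = N/2 - d` with `d = ⌈max (log (√(2/π)·c/c_v) / log ρ) 1⌉`, so that
`ρ^d ≥ √(2/π)·c/c_v` and `1 ≤ k`. Its residual `r_k = (N/2π)·ŝ(k)·α̂_k - v̂(k)` is one term of the
series defining `t(α̂)`, whence `√(2π)·|r_k| ≤ c·ρ^{-N/2} = c·ρ^{-d}·ρ^{-k} ≤ √(2π)·(c_v/2)·ρ^{-k}`.
Then `(N/2π)·|ŝ(k)|·|α̂_k| ≥ |v̂(k)| - |r_k| ≥ (c_v/2)·ρ^{-k}`, and the decay of `ŝ` gives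
`|α̂_k| ≥ π·c_v·k/(N·C_s)·(R/ρ)^k`. Finally `k/N ≥ 1/(2(d+1))` and
`(R/ρ)^k = (ρ/R)^d·(R/ρ)^{N/2}`. -/

open scoped BigOperators ENNReal NNReal

noncomputable section

open Real

theorem sqrt_mul_norm_le_of_weighted_l2_le {ι E : Type*} [SeminormedAddCommGroup E]
    {w r : ℝ} (hw : 0 ≤ w) (hr : 0 ≤ r) (f : ι → E) (i : ι)
    (h : (ENNReal.ofReal w * ∑' j, (‖f j‖₊ : ℝ≥0∞) ^ 2) ^ (1 / 2 : ℝ) ≤ ENNReal.ofReal r) :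
    √w * ‖f i‖ ≤ r := by
  have hterm : ENNReal.ofReal (√w * ‖f i‖) =
      (ENNReal.ofReal w * (‖f i‖₊ : ℝ≥0∞) ^ 2) ^ (1 / 2 : ℝ) := by
    rw [← enorm_eq_nnnorm, ← ofReal_norm, ← ENNReal.ofReal_pow (norm_nonneg _),
      ← ENNReal.ofReal_mul' (sq_nonneg ‖f i‖),
      ENNReal.ofReal_rpow_of_nonneg (by positivity : 0 ≤ w * ‖f i‖ ^ 2) (by norm_num),
      ← Real.sqrt_eq_rpow, Real.sqrt_mul' _ (sq_nonneg _), Real.sqrt_sq (norm_nonneg _)]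
  rw [← ENNReal.ofReal_le_ofReal_iff hr, hterm]
  refine le_trans (ENNReal.rpow_le_rpow ?_ (by norm_num)) h
  gcongr
  exact ENNReal.le_tsum i

theorem le_two_mul_norm_mul_of_norm_sub_le {𝕜 : Type*} [SeminormedRing 𝕜] {μ σ b ν : 𝕜}
    {S V : ℝ} (hσ : ‖σ‖ ≤ S) (hν : V ≤ ‖ν‖) (hres : ‖μ * σ * b - ν‖ ≤ V / 2) :
    V ≤ 2 * (‖μ‖ * S * ‖b‖) := by
  have h := norm_sub_norm_le ν (μ * σ * b)
  rw [norm_sub_rev] at h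
  have : ‖μ * σ * b‖ ≤ ‖μ‖ * S * ‖b‖ := norm_mul₃_le.trans (by gcongr)
  linarith

theorem winRep_eq_self_of_mem_window {N : ℕ} {m : ℤ} (hN : Even N) (hm : m ∈ window N) :
    winRep N m = m := by
  obtain ⟨K, rfl⟩ := hN
  simp only [window, Finset.mem_Icc] at hm
  rw [winRep, Int.emod_eq_of_lt] <;> omega

theorem natCast_mem_window {N k : ℕ} (hk : 0 < k) (hkN : 2 * k ≤ N) : (k : ℤ) ∈ window N := by
  simp only [window, Finset.mem_Icc]
  omega

theorem norm_le_coefNorm {N : ℕ} {k : ℤ} (a : ℤ → ℂ) (hk : k ∈ window N) :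
    ‖a k‖ ≤ coefNorm N a :=
  Real.le_sqrt_of_sq_le <|
    Finset.single_le_sum (f := fun k ↦ ‖a k‖ ^ 2) (fun _ _ ↦ by positivity) hk

theorem sqrt_two_pi_mul_norm_le_of_tErr_le {N : ℕ} {s v a : ℤ → ℂ} {r : ℝ} (hr : 0 ≤ r)
    (h : tErr N s v a ≤ ENNReal.ofReal r) (m : ℤ) :
    √(2 * π) * ‖(N : ℂ) / (2 * (π : ℂ)) * s m * a (winRep N m) - v m‖ ≤ r :=
  sqrt_mul_norm_le_of_weighted_l2_le (by positivity) hr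
    (fun m ↦ (N : ℂ) / (2 * (π : ℂ)) * s m * a (winRep N m) - v m) m h

theorem le_half_mul_inv_pow_of_sqrt_two_pi_mul_le {x c cv ρ : ℝ} {k d : ℕ} (hρ : 0 < ρ)
    (hd : √(2 / π) * c ≤ cv * ρ ^ d) (hx : √(2 * π) * x ≤ c * (ρ ^ (d + k))⁻¹) :
    x ≤ cv * (ρ ^ k)⁻¹ / 2 := by
  have hsqrt : √(2 / π) * √(2 * π) = 2 := by
    rw [← Real.sqrt_mul (by positivity), show 2 / π * (2 * π) = 2 ^ 2 by
      field_simp]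
    exact Real.sqrt_sq zero_le_two
  calc x = √(2 / π) * (√(2 * π) * x) / 2 := by rw [← mul_assoc, hsqrt]; ring
    _ ≤ √(2 / π) * (c * (ρ ^ (d + k))⁻¹) / 2 := by gcongr
    _ = √(2 / π) * c * (ρ ^ d)⁻¹ * (ρ ^ k)⁻¹ / 2 := by rw [pow_add, mul_inv]; ring
    _ ≤ cv * ρ ^ d * (ρ ^ d)⁻¹ * (ρ ^ k)⁻¹ / 2 := by gcongr
    _ = cv * (ρ ^ k)⁻¹ / 2 := by rw [mul_inv_cancel_right₀ (by positivity)]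

theorem mode_lower_bound {N k : ℕ} {R ρ cv Cs : ℝ} {σ ν b : ℂ} (hN : 0 < N) (hk : 0 < k)
    (hCs : 0 < Cs) (hρ : 0 < ρ) (hR : 0 < R)
    (hσ : ‖σ‖ ≤ Cs / k * (R ^ k)⁻¹) (hν : cv * (ρ ^ k)⁻¹ ≤ ‖ν‖)
    (hres : ‖(N : ℂ) / (2 * (π : ℂ)) * σ * b - ν‖ ≤ cv * (ρ ^ k)⁻¹ / 2) :
    π * cv * k / (N * Cs) * (R / ρ) ^ k ≤ ‖b‖ := by
  have h := le_two_mul_norm_mul_of_norm_sub_le hσ hν hres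
  rw [show ‖(N : ℂ) / (2 * (π : ℂ))‖ = N / (2 * π) by
    simp [abs_of_pos pi_pos]] at h
  rw [div_pow]
  field_simp at h ⊢
  exact h

theorem rpow_natCast_add_self_div_two (x : ℝ) (K : ℕ) : x ^ (((K + K : ℕ) : ℝ) / 2) = x ^ K := by
  rw [show (((K + K : ℕ) : ℝ) / 2) = K by push_cast; ring, Real.rpow_natCast]

def growthConst (R ρ cv Cs : ℝ) (d : ℕ) : ℝ :=
  π * cv / (2 * (d + 1) * Cs) * ((R / ρ) ^ d)⁻¹

theorem growthConst_pos {R ρ cv Cs : ℝ} (d : ℕ) (hR : 0 < R) (hρ : 0 < ρ) (hcv : 0 < cv)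
    (hCs : 0 < Cs) : 0 < growthConst R ρ cv Cs d := by
  unfold growthConst
  positivity

theorem growthConst_mul_pow_le {R ρ cv Cs : ℝ} {d k : ℕ} (hk : 0 < k) (hR : 0 < R)
    (hρ : 0 < ρ) (hcv : 0 ≤ cv) (hCs : 0 < Cs) :
    growthConst R ρ cv Cs d * (R / ρ) ^ (d + k) ≤
      π * cv * k / ((d + k + (d + k) : ℕ) * Cs) * (R / ρ) ^ k := by
  have hdk : (d + k : ℝ) ≤ k * (d + 1) := by
    nlinarith [(Nat.one_le_cast (α := ℝ)).2 hk, (Nat.cast_nonneg d : (0 : ℝ) ≤ d)]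
  rw [growthConst, pow_add, mul_assoc, inv_mul_cancel_left₀ (by positivity)]
  gcongr ?_ * _
  rw [div_le_div_iff₀ (by positivity) (by positivity)]
  push_cast
  nlinarith [mul_nonneg (mul_nonneg pi_pos.le hcv) hCs.le]

/-- Exponential growth of the MFS coefficient norm when the charge radius `R` exceeds the
singularity radius `ρ` of the boundary data: any coefficient vector achieving error
`t ≤ c·ρ^{-N/2}` must satisfy `|α̂| ≥ C·(R/ρ)^{N/2}`. -/
theorem mfs_coefficient_growth
    (R ρ cv Cs c : ℝ) (hρ : 1 < ρ) (hρR : ρ < R)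
    (hcv : 0 < cv) (hCs : 0 < Cs) (hc : 0 < c)
    (s v : ℤ → ℂ)
    (hsu : ∀ m : ℤ, m ≠ 0 → ‖s m‖ ≤ Cs / |(m : ℝ)| * R ^ (-|m|))
    (hv : ∀ m : ℤ, cv * ρ ^ (-|m|) ≤ ‖v m‖) :
    ∃ C : ℝ, 0 < C ∧ ∀ N : ℕ, Even N →
      (N : ℝ) > 3 + 2 * max (Real.log (Real.sqrt (2 / Real.pi) * c / cv) / Real.log ρ) 1 →
      ∀ a : ℤ → ℂ,
        tErr N s v a ≤ ENNReal.ofReal (c * ρ ^ (-(N : ℝ) / 2)) →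
        C * (R / ρ) ^ ((N : ℝ) / 2) ≤ coefNorm N a := by
  have hρ0 : 0 < ρ := by linarith
  have hR0 : 0 < R := by linarith
  set L := max (Real.log (√(2 / π) * c / cv) / Real.log ρ) 1
  set d := ⌈L⌉₊
  have hρd : √(2 / π) * c ≤ cv * ρ ^ d := by
    rw [← div_le_iff₀' hcv, ← Real.rpow_natCast, ← Real.logb_le_iff_le_rpow hρ (by positivity)]
    exact (le_max_left _ _).trans (Nat.le_ceil L)
  refine ⟨growthConst R ρ cv Cs d, growthConst_pos d hR0 hρ0 hcv hCs, ?_⟩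
  rintro N ⟨K, rfl⟩ hN a ht
  have hdK : d < K := by
    have := Nat.ceil_lt_add_one (zero_le_one.trans (le_max_right _ 1 : 1 ≤ L))
    push_cast at hN
    exact_mod_cast (show (d : ℝ) < K by linarith)
  obtain ⟨k, rfl⟩ := Nat.exists_eq_add_of_le hdK.le
  have hk : 0 < k := by omega
  have hk_mem : (k : ℤ) ∈ window (d + k + (d + k)) := natCast_mem_window hk (by omega)
  have hres := sqrt_two_pi_mul_norm_le_of_tErr_le (by positivity) ht k
  rw [winRep_eq_self_of_mem_window ⟨_, rfl⟩ hk_mem, neg_div, Real.rpow_neg hρ0.le,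
    rpow_natCast_add_self_div_two] at hres
  have hmode := mode_lower_bound (by omega) hk hCs hρ0 hR0
    (by simpa using hsu k (by positivity)) (by simpa using hv k)
    (le_half_mul_inv_pow_of_sqrt_two_pi_mul_le hρ0 hρd hres)
  calc growthConst R ρ cv Cs d * (R / ρ) ^ (((d + k + (d + k) : ℕ) : ℝ) / 2)
      = growthConst R ρ cv Cs d * (R / ρ) ^ (d + k) := by rw [rpow_natCast_add_self_div_two]
    _ ≤ π * cv * k / ((d + k + (d + k) : ℕ) * Cs) * (R / ρ) ^ k :=
        growthConst_mul_pow_le hk hR0 hρ0 hcv.le hCs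
    _ ≤ ‖a k‖ := hmode
    _ ≤ coefNorm _ a := norm_le_coefNorm a hk_mem
end
end
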